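/- Let α, β, γ, δ > 0 and let r, σ be real exponents with 4 < r and 4 < σ. Define Ψ(s) = (α/2) e^{2s} + (β/4) e^{4s} − γ e^{r s} − δ e^{σ s} for s ∈ ℝ. Then Ψ has a unique critical point t̄ ∈ ℝ, which is its strict global maximum point, with Ψ(t̄) > 0; Ψ is strictly increasing on (−∞, t̄] and strictly decreasing on [t̄, +∞); and Ψ′(0) < 0 if and only if t̄ < 0. -/

import Mathlib

/-!
Factor `Ψ'(s) = e^{4s} g(s)`, where `g = fiberSlope`,
`g(s) = α e^{-2s} + β - γ r e^{(r-4)s} - δ σ e^{(σ-4)s}`.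
Since `r, σ > 4`, every term of `g` is strictly decreasing, and `g` runs from `+∞` to `-∞`;
so `g`, hence `Ψ'`, has exactly one zero `t̄`, with `Ψ' > 0` before it and `Ψ' < 0` after it.
Positivity of the maximum comes from `Ψ(s) → 0` as `s → -∞` together with the strict increase
of `Ψ` on `(-∞, t̄]`.
-/

open Real Filter Topology Set

section PeakedFunction

variable {f : ℝ → ℝ} {t : ℝ}

theorem StrictMonoOn.lt_of_ne_of_strictAntiOn (hmono : StrictMonoOn f (Iic t))
    (hanti : StrictAntiOn f (Ici t)) {s : ℝ} (hs : s ≠ t) : f s < f t := by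
  rcases hs.lt_or_gt with h | h
  · exact hmono h.le self_mem_Iic h
  · exact hanti self_mem_Ici h.le h

theorem StrictMonoOn.pos_of_tendsto_atBot_zero (hmono : StrictMonoOn f (Iic t))
    (hf : Tendsto f atBot (𝓝 0)) : 0 < f t := by
  have hnonneg : 0 ≤ f (t - 1) := by
    refine le_of_tendsto hf ?_
    filter_upwards [eventually_le_atBot (t - 1)] with s hs
    exact hmono.monotoneOn (hs.trans (by linarith)) (by simp) hs
  exact hnonneg.trans_lt (hmono (by simp) self_mem_Iic (by linarith))

end PeakedFunction

theorem hasDerivAt_exp_const_mul (c s : ℝ) :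
    HasDerivAt (fun x => exp (c * x)) (c * exp (c * s)) s := by
  simpa [mul_comm] using ((hasDerivAt_id s).const_mul c).exp

theorem tendsto_exp_const_mul_atBot {c : ℝ} (hc : 0 < c) :
    Tendsto (fun s => exp (c * s)) atBot (𝓝 0) :=
  tendsto_exp_comp_nhds_zero.2 (tendsto_id.const_mul_atBot hc)

theorem tendsto_exp_const_mul_atTop {c : ℝ} (hc : 0 < c) :
    Tendsto (fun s => exp (c * s)) atTop atTop :=
  tendsto_exp_comp_atTop.2 (tendsto_id.const_mul_atTop hc)

noncomputable section

variable (α β γ δ r σ : ℝ)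

def fiberMap (s : ℝ) : ℝ :=
  α / 2 * exp (2 * s) + β / 4 * exp (4 * s) - γ * exp (r * s) - δ * exp (σ * s)

def fiberSlope (s : ℝ) : ℝ :=
  α * exp (-2 * s) + β - γ * r * exp ((r - 4) * s) - δ * σ * exp ((σ - 4) * s)

theorem continuous_fiberMap : Continuous (fiberMap α β γ δ r σ) := by
  unfold fiberMap; fun_prop

theorem continuous_fiberSlope : Continuous (fiberSlope α β γ δ r σ) := by
  unfold fiberSlope; fun_prop

theorem hasDerivAt_fiberMap (s : ℝ) :
    HasDerivAt (fiberMap α β γ δ r σ) (exp (4 * s) * fiberSlope α β γ δ r σ s) s := by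
  have h := ((((hasDerivAt_exp_const_mul 2 s).const_mul (α / 2)).add
    ((hasDerivAt_exp_const_mul 4 s).const_mul (β / 4))).sub
    ((hasDerivAt_exp_const_mul r s).const_mul γ)).sub ((hasDerivAt_exp_const_mul σ s).const_mul δ)
  refine h.congr_deriv ?_
  have e2 : exp (4 * s) * exp (-2 * s) = exp (2 * s) := by rw [← exp_add]; ring_nf
  have er : exp (4 * s) * exp ((r - 4) * s) = exp (r * s) := by rw [← exp_add]; ring_nf
  have eσ : exp (4 * s) * exp ((σ - 4) * s) = exp (σ * s) := by rw [← exp_add]; ring_nf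
  simp only [fiberSlope]
  linear_combination -α * e2 + γ * r * er + δ * σ * eσ

variable {α β γ δ r σ}

theorem strictAnti_fiberSlope (hα : 0 < α) (hγ : 0 < γ) (hδ : 0 < δ) (hr : 4 < r) (hσ : 4 < σ) :
    StrictAnti (fiberSlope α β γ δ r σ) := by
  intro x y hxy
  have e1 : exp (-2 * y) < exp (-2 * x) := exp_lt_exp.2 (by linarith)
  have e2 : exp ((r - 4) * x) < exp ((r - 4) * y) := exp_lt_exp.2 (by nlinarith)
  have e3 : exp ((σ - 4) * x) < exp ((σ - 4) * y) := exp_lt_exp.2 (by nlinarith)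
  have h1 := mul_lt_mul_of_pos_left e1 hα
  have h2 := mul_lt_mul_of_pos_left e2 (mul_pos hγ (by linarith : (0 : ℝ) < r))
  have h3 := mul_lt_mul_of_pos_left e3 (mul_pos hδ (by linarith : (0 : ℝ) < σ))
  simp only [fiberSlope]
  linarith

theorem tendsto_fiberSlope_atBot (hα : 0 < α) (hr : 4 < r) (hσ : 4 < σ) :
    Tendsto (fiberSlope α β γ δ r σ) atBot atTop := by
  have hdom : Tendsto (fun s => α * exp (-2 * s)) atBot atTop :=
    (tendsto_exp_comp_atTop.2 (tendsto_id.const_mul_atBot_of_neg (by norm_num))).const_mul_atTop hα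
  have hrest : Tendsto (fun s => β - γ * r * exp ((r - 4) * s) - δ * σ * exp ((σ - 4) * s)) atBot
      (𝓝 (β - γ * r * 0 - δ * σ * 0)) :=
    (tendsto_const_nhds.sub ((tendsto_exp_const_mul_atBot (by linarith)).const_mul _)).sub
      ((tendsto_exp_const_mul_atBot (by linarith)).const_mul _)
  exact (hdom.atTop_add hrest).congr fun s => by simp only [fiberSlope]; ring

theorem tendsto_fiberSlope_atTop (hγ : 0 < γ) (hδ : 0 < δ) (hr : 4 < r) (hσ : 4 < σ) :
    Tendsto (fiberSlope α β γ δ r σ) atTop atBot := by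
  have hbdd : Tendsto (fun s => α * exp (-2 * s) + β) atTop (𝓝 (α * 0 + β)) :=
    ((tendsto_exp_comp_nhds_zero.2
      (tendsto_id.const_mul_atTop_of_neg (by norm_num))).const_mul α).add_const β
  have hdom : Tendsto (fun s => γ * r * exp ((r - 4) * s) + δ * σ * exp ((σ - 4) * s)) atTop
      atTop :=
    ((tendsto_exp_const_mul_atTop (by linarith)).const_mul_atTop (by nlinarith)).atTop_add_atTop
      ((tendsto_exp_const_mul_atTop (by linarith)).const_mul_atTop (by nlinarith))
  exact (hbdd.add_atBot (tendsto_neg_atTop_atBot.comp hdom)).congr fun s => by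
    simp only [fiberSlope, Function.comp_apply]; ring

theorem exists_fiberSlope_eq_zero (hα : 0 < α) (hγ : 0 < γ) (hδ : 0 < δ) (hr : 4 < r) (hσ : 4 < σ) :
    ∃ t, fiberSlope α β γ δ r σ t = 0 :=
  (continuous_fiberSlope α β γ δ r σ).surjective' (tendsto_fiberSlope_atBot hα hr hσ)
    (tendsto_fiberSlope_atTop hγ hδ hr hσ) 0

theorem tendsto_fiberMap_atBot (hr : 0 < r) (hσ : 0 < σ) :
    Tendsto (fiberMap α β γ δ r σ) atBot (𝓝 0) := by
  rw [show (0 : ℝ) = α / 2 * 0 + β / 4 * 0 - γ * 0 - δ * 0 by ring]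
  exact ((((tendsto_exp_const_mul_atBot two_pos).const_mul _).add
    ((tendsto_exp_const_mul_atBot four_pos).const_mul _)).sub
    ((tendsto_exp_const_mul_atBot hr).const_mul _)).sub
    ((tendsto_exp_const_mul_atBot hσ).const_mul _)

section SignOfDeriv

variable {t : ℝ} (hg : StrictAnti (fiberSlope α β γ δ r σ)) (ht : fiberSlope α β γ δ r σ t = 0)
include hg ht

theorem deriv_fiberMap_pos_iff {s : ℝ} : 0 < deriv (fiberMap α β γ δ r σ) s ↔ s < t := by
  rw [(hasDerivAt_fiberMap α β γ δ r σ s).deriv, mul_pos_iff_of_pos_left (exp_pos _), ← ht,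
    hg.lt_iff_gt]

theorem deriv_fiberMap_neg_iff {s : ℝ} : deriv (fiberMap α β γ δ r σ) s < 0 ↔ t < s := by
  rw [(hasDerivAt_fiberMap α β γ δ r σ s).deriv, ← neg_pos, ← mul_neg,
    mul_pos_iff_of_pos_left (exp_pos _), neg_pos, ← ht, hg.lt_iff_gt]

theorem deriv_fiberMap_eq_zero_iff {s : ℝ} : deriv (fiberMap α β γ δ r σ) s = 0 ↔ s = t := by
  rw [(hasDerivAt_fiberMap α β γ δ r σ s).deriv, mul_eq_zero, or_iff_right (exp_ne_zero _), ← ht,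
    hg.injective.eq_iff]

theorem strictMonoOn_fiberMap_Iic : StrictMonoOn (fiberMap α β γ δ r σ) (Iic t) :=
  strictMonoOn_of_deriv_pos (convex_Iic t) (continuous_fiberMap α β γ δ r σ).continuousOn
    fun s hs => (deriv_fiberMap_pos_iff hg ht).2 (by simpa using hs)

theorem strictAntiOn_fiberMap_Ici : StrictAntiOn (fiberMap α β γ δ r σ) (Ici t) :=
  strictAntiOn_of_deriv_neg (convex_Ici t) (continuous_fiberMap α β γ δ r σ).continuousOn
    fun s hs => (deriv_fiberMap_neg_iff hg ht).2 (by simpa using hs)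

end SignOfDeriv

end

theorem stmt_16_general (α β γ δ r σ : ℝ)
    (hα : 0 < α) (hγ : 0 < γ) (hδ : 0 < δ)
    (hr : 4 < r) (hσ : 4 < σ)
    (Ψ : ℝ → ℝ)
    (hΨ : ∀ s, Ψ s = α / 2 * Real.exp (2 * s) + β / 4 * Real.exp (4 * s)
      - γ * Real.exp (r * s) - δ * Real.exp (σ * s)) :
    ∃ tbar : ℝ,
      (∀ s, deriv Ψ s = 0 ↔ s = tbar) ∧
      0 < Ψ tbar ∧
      (∀ s, s ≠ tbar → Ψ s < Ψ tbar) ∧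
      StrictMonoOn Ψ (Set.Iic tbar) ∧
      StrictAntiOn Ψ (Set.Ici tbar) ∧
      (deriv Ψ 0 < 0 ↔ tbar < 0) := by
  obtain rfl : Ψ = fiberMap α β γ δ r σ := funext hΨ
  have hg := strictAnti_fiberSlope (β := β) hα hγ hδ hr hσ
  obtain ⟨t, ht⟩ := exists_fiberSlope_eq_zero (β := β) hα hγ hδ hr hσ
  have hmono := strictMonoOn_fiberMap_Iic hg ht
  have hanti := strictAntiOn_fiberMap_Ici hg ht
  exact ⟨t, fun _ => deriv_fiberMap_eq_zero_iff hg ht,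
    hmono.pos_of_tendsto_atBot_zero (tendsto_fiberMap_atBot (by linarith) (by linarith)),
    fun _ hs => hmono.lt_of_ne_of_strictAntiOn hanti hs, hmono, hanti, deriv_fiberMap_neg_iff hg ht⟩

/-- for `α, β, γ, δ > 0` and exponents `r, σ > 4`, the fiber map
`Ψ(s) = (α/2)e^{2s} + (β/4)e^{4s} − γ e^{rs} − δ e^{σs}` has a unique critical point
`t̄ ∈ ℝ`, which is its strict global maximum with `Ψ(t̄) > 0`; `Ψ` is strictly increasing
on `(−∞, t̄]`, strictly decreasing on `[t̄, ∞)`, and `Ψ′(0) < 0 ↔ t̄ < 0`. -/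
theorem stmt_16 (α β γ δ r σ : ℝ)
    (hα : 0 < α) (hβ : 0 < β) (hγ : 0 < γ) (hδ : 0 < δ)
    (hr : 4 < r) (hσ : 4 < σ)
    (Ψ : ℝ → ℝ)
    (hΨ : ∀ s, Ψ s = α / 2 * Real.exp (2 * s) + β / 4 * Real.exp (4 * s)
      - γ * Real.exp (r * s) - δ * Real.exp (σ * s)) :
    ∃ tbar : ℝ,
      (∀ s, deriv Ψ s = 0 ↔ s = tbar) ∧
      0 < Ψ tbar ∧
      (∀ s, s ≠ tbar → Ψ s < Ψ tbar) ∧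
      StrictMonoOn Ψ (Set.Iic tbar) ∧
      StrictAntiOn Ψ (Set.Ici tbar) ∧
      (deriv Ψ 0 < 0 ↔ tbar < 0) :=
  stmt_16_general α β γ δ r σ hα hγ hδ hr hσ Ψ hΨ
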